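/- arXiv:0705.3271 — 7 statements merged into one kernel-verified Lean document; each statement's English description precedes it below -/
import Mathlib

section
/- The map P⁺ sending (a,b,c,q̄) to (a, 2a+b, a+b+c, q̄) if 4a+2b+c < 0 and to (−a−b−c, −2a−b, −a, q̄) if 4a+2b+c > 0 maps prototypes of discriminant D to prototypes of discriminant D. -/
/-- A prototype of discriminant `D`: a quadruple `(a, b, c, q)` with
`b² − 4ac = D`, `a > 0`, `c < 0`, `gcd(a,b,c,q) = 1`, `a + b + c < 0`. -/
def IsPrototype (D : ℤ) (P : ℤ × ℤ × ℤ × ℤ) : Prop :=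
  P.2.1 ^ 2 - 4 * P.1 * P.2.2.1 = D ∧ 0 < P.1 ∧ P.2.2.1 < 0 ∧
    Int.gcd P.1 (Int.gcd P.2.1 (Int.gcd P.2.2.1 P.2.2.2)) = 1 ∧
    P.1 + P.2.1 + P.2.2.1 < 0

/-- The "next prototype" map `P ↦ P⁺`. -/
def protoPlus (P : ℤ × ℤ × ℤ × ℤ) : ℤ × ℤ × ℤ × ℤ :=
  if 4 * P.1 + 2 * P.2.1 + P.2.2.1 < 0 then
    (P.1, 2 * P.1 + P.2.1, P.1 + P.2.1 + P.2.2.1, P.2.2.2)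
  else
    (-P.1 - P.2.1 - P.2.2.1, -2 * P.1 - P.2.1, -P.1, P.2.2.2)

/-!
Read `(a, b, c)` as the form `f = a x² + b xy + c y²`. Then `(a, 2a + b, a + b + c)` is
`f(x + y, y)`, and the other branch is `-f(x + y, y)` with `x` and `y` swapped. Both changes of
variables are unimodular, so they preserve the discriminant and the gcd of the coefficients.
The sign conditions are read off `f(1, 1) = a + b + c < 0` and `f(2, 1) = 4a + 2b + c`, which
is nonzero because otherwise `D = (b + 4a)²`.
-/

lemma gcd_gcd_gcd_eq_one_of_dvd {a b c a' b' c' q : ℤ}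
    (h : ∀ d : ℤ, d ∣ a' → d ∣ b' → d ∣ c' → d ∣ a ∧ d ∣ b ∧ d ∣ c)
    (hg : Int.gcd a (Int.gcd b (Int.gcd c q)) = 1) :
    Int.gcd a' (Int.gcd b' (Int.gcd c' q)) = 1 := by
  set g : ℤ := ↑(Int.gcd a' (Int.gcd b' (Int.gcd c' q)))
  have hrest : g ∣ Int.gcd b' (Int.gcd c' q) := Int.gcd_dvd_right ..
  have hrest' : g ∣ Int.gcd c' q := hrest.trans (Int.gcd_dvd_right ..)
  obtain ⟨ha, hb, hc⟩ := h g (Int.gcd_dvd_left ..) (hrest.trans (Int.gcd_dvd_left ..))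
    (hrest'.trans (Int.gcd_dvd_left ..))
  have hq : g ∣ q := hrest'.trans (Int.gcd_dvd_right ..)
  have hg' : g ∣ (1 : ℕ) :=
    hg ▸ Int.dvd_coe_gcd ha (Int.dvd_coe_gcd hb (Int.dvd_coe_gcd hc hq))
  exact Nat.dvd_one.mp (Int.natCast_dvd_natCast.mp hg')

lemma four_mul_add_two_mul_add_ne_zero_of_not_isSquare {a b c : ℤ}
    (hns : ¬ IsSquare (b ^ 2 - 4 * a * c)) : 4 * a + 2 * b + c ≠ 0 := by
  intro h
  obtain rfl : c = -4 * a - 2 * b := by linarith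
  exact hns ⟨b + 4 * a, by ring⟩

namespace IsPrototype

variable {D a b c q : ℤ}

lemma translate (hP : IsPrototype D (a, b, c, q)) (h : 4 * a + 2 * b + c < 0) :
    IsPrototype D (a, 2 * a + b, a + b + c, q) := by
  obtain ⟨hdisc, ha, -, hgcd, hsum⟩ := hP
  refine ⟨by rw [← hdisc]; ring, ha, hsum, gcd_gcd_gcd_eq_one_of_dvd ?_ hgcd, by linarith⟩
  intro d (hda : d ∣ a) (h₂ : d ∣ 2 * a + b) (h₃ : d ∣ a + b + c)
  have hdb : d ∣ b := by simpa using dvd_sub h₂ (hda.mul_left 2)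
  have hdc : d ∣ c := by simpa using dvd_sub h₃ (dvd_add hda hdb)
  exact ⟨hda, hdb, hdc⟩

lemma translate_swap_neg (hP : IsPrototype D (a, b, c, q)) (h : 0 < 4 * a + 2 * b + c) :
    IsPrototype D (-a - b - c, -2 * a - b, -a, q) := by
  obtain ⟨hdisc, ha, -, hgcd, hsum⟩ := hP
  refine ⟨by rw [← hdisc]; ring, by linarith, by linarith,
    gcd_gcd_gcd_eq_one_of_dvd ?_ hgcd, by linarith⟩
  intro d (h₁ : d ∣ -a - b - c) (h₂ : d ∣ -2 * a - b) (h₃ : d ∣ -a)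
  have hda : d ∣ a := dvd_neg.mp h₃
  have hdb : d ∣ b := by simpa using dvd_sub (hda.mul_left (-2)) h₂
  have hdc : d ∣ c := by simpa using dvd_sub (dvd_sub (dvd_neg.mpr hda) hdb) h₁
  exact ⟨hda, hdb, hdc⟩

end IsPrototype

theorem protoPlus_isPrototype_general (D : ℤ) (hns : ¬ IsSquare D)
    (P : ℤ × ℤ × ℤ × ℤ) (hP : IsPrototype D P) :
    IsPrototype D (protoPlus P) := by
  obtain ⟨a, b, c, q⟩ := P
  have hne : 4 * a + 2 * b + c ≠ 0 :=
    four_mul_add_two_mul_add_ne_zero_of_not_isSquare (hP.1 ▸ hns)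
  unfold protoPlus
  split_ifs with h
  · exact hP.translate h
  · exact hP.translate_swap_neg (lt_of_le_of_ne (not_lt.mp h) hne.symm)

/-- `P⁺` maps prototypes of nonsquare discriminant `D` to prototypes of discriminant `D`. -/
theorem protoPlus_isPrototype (D : ℤ) (hD : 0 < D) (hns : ¬ IsSquare D)
    (P : ℤ × ℤ × ℤ × ℤ) (hP : IsPrototype D P) :
    IsPrototype D (protoPlus P) :=
  protoPlus_isPrototype_general D hns P hP
end

section
/- The maps P ↦ P⁺ and P ↦ P⁻ on prototypes of discriminant D are mutually inverse: (P⁺)⁻ = (P⁻)⁺ = P for every prototype P. -/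
/-- The "previous prototype" map `P ↦ P⁻`. -/
def protoMinus (P : ℤ × ℤ × ℤ × ℤ) : ℤ × ℤ × ℤ × ℤ :=
  if P.1 - P.2.1 + P.2.2.1 < 0 then
    (P.1, -2 * P.1 + P.2.1, P.1 - P.2.1 + P.2.2.1, P.2.2.2)
  else
    (-P.2.2.1, -P.2.1 + 2 * P.2.2.1, -P.1 + P.2.1 - P.2.2.1, P.2.2.2)

/-- `P ↦ P⁺` and `P ↦ P⁻` are mutually inverse on prototypes of nonsquare
discriminant `D`: `(P⁺)⁻ = (P⁻)⁺ = P`. -/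
theorem protoPlus_protoMinus_inverse (D : ℤ) (hD : 0 < D) (hns : ¬ IsSquare D)
    (P : ℤ × ℤ × ℤ × ℤ) (hP : IsPrototype D P) :
    protoMinus (protoPlus P) = P ∧ protoPlus (protoMinus P) = P := by
  obtain ⟨a, b, c, q⟩ := P
  obtain ⟨hdisc, ha, hc, hgcd, hsum⟩ := hP
  simp only at hdisc ha hc hsum
  have h1 : 4 * a + 2 * b + c ≠ 0 := by
    intro h
    exact hns ⟨b + 4 * a, by rw [← hdisc]; nlinarith⟩
  have h2 : a - b + c ≠ 0 := by
    intro h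
    exact hns ⟨b - 2 * a, by rw [← hdisc]; nlinarith⟩
  constructor <;>
  · simp only [protoPlus, protoMinus]
    split_ifs with h3 h4 <;>
      simp only [Prod.mk.injEq, and_true, true_and, eq_self_iff_true] at * <;>
      omega
end

section
/- The map t defined by t(a,b,c,q̄) = (a,−b,c,q̄) if a−b+c < 0 and t(a,b,c,q̄) = (−c,b,−a,q̄) if a−b+c > 0 is an involution on the set of prototypes of discriminant D. -/
/-- The map `t` on prototypes: `t(a,b,c,q̄) = (a,−b,c,q̄)` if `a−b+c < 0`, and
`t(a,b,c,q̄) = (−c,b,−a,q̄)` if `a−b+c > 0`. -/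
def protoT (P : ℤ × ℤ × ℤ × ℤ) : ℤ × ℤ × ℤ × ℤ :=
  if P.1 - P.2.1 + P.2.2.1 < 0 then
    (P.1, -P.2.1, P.2.2.1, P.2.2.2)
  else
    (-P.2.2.1, P.2.1, -P.1, P.2.2.2)

/-! Both branches of `t` preserve the discriminant `b² − 4ac` and the gcd, and the sign
condition selecting a branch is exactly what makes the new `a + b + c` negative. Applying `t`
twice takes the same branch again because the original `a + b + c` is negative; the only
thing to exclude is `a − b + c = 0`, which would make `D = (a − c)²` a square. -/

lemma isSquare_sq_sub_four_mul_of_sub_add_eq_zero {a b c : ℤ} (h : a - b + c = 0) :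
    IsSquare (b ^ 2 - 4 * a * c) :=
  ⟨a - c, by rw [show b = a + c by omega]; ring⟩

lemma Int.gcd_neg_gcd_gcd_neg_comm (a b c q : ℤ) :
    Int.gcd (-c) (Int.gcd b (Int.gcd (-a) q)) = Int.gcd a (Int.gcd b (Int.gcd c q)) := by
  simp only [Int.gcd, Int.natAbs_neg, Int.natAbs_natCast]
  ac_rfl

lemma protoT_of_sub_add_neg {a b c q : ℤ} (h : a - b + c < 0) :
    protoT (a, b, c, q) = (a, -b, c, q) :=
  if_pos h

lemma protoT_of_sub_add_pos {a b c q : ℤ} (h : 0 < a - b + c) :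
    protoT (a, b, c, q) = (-c, b, -a, q) :=
  if_neg h.not_gt

namespace IsPrototype

variable {D a b c q : ℤ}

lemma sub_add_ne_zero (hP : IsPrototype D (a, b, c, q)) (hD : ¬ IsSquare D) :
    a - b + c ≠ 0 := fun h ↦
  hD (hP.1 ▸ isSquare_sq_sub_four_mul_of_sub_add_eq_zero h)

lemma neg_middle (hP : IsPrototype D (a, b, c, q)) (h : a - b + c < 0) :
    IsPrototype D (a, -b, c, q) := by
  dsimp only [IsPrototype] at hP ⊢
  obtain ⟨hdisc, ha, hc, hgcd, -⟩ := hP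
  refine ⟨by rw [← hdisc]; ring, ha, hc, ?_, by simpa [← sub_eq_add_neg] using h⟩
  simpa only [Int.neg_gcd] using hgcd

lemma swap_neg (hP : IsPrototype D (a, b, c, q)) (h : 0 < a - b + c) :
    IsPrototype D (-c, b, -a, q) := by
  dsimp only [IsPrototype] at hP ⊢
  obtain ⟨hdisc, ha, hc, hgcd, -⟩ := hP
  exact ⟨by rw [← hdisc]; ring, by omega, by omega,
    (Int.gcd_neg_gcd_gcd_neg_comm a b c q).trans hgcd, by omega⟩

end IsPrototype

theorem protoT_involution_general (D : ℤ) (hns : ¬ IsSquare D)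
    (P : ℤ × ℤ × ℤ × ℤ) (hP : IsPrototype D P) :
    IsPrototype D (protoT P) ∧ protoT (protoT P) = P := by
  obtain ⟨a, b, c, q⟩ := P
  have hsum : a + b + c < 0 := hP.2.2.2.2
  rcases (hP.sub_add_ne_zero hns).lt_or_gt with h | h
  · rw [protoT_of_sub_add_neg h, protoT_of_sub_add_neg (by omega), neg_neg]
    exact ⟨hP.neg_middle h, rfl⟩
  · rw [protoT_of_sub_add_pos h, protoT_of_sub_add_pos (by omega), neg_neg, neg_neg]
    exact ⟨hP.swap_neg h, rfl⟩

/-- `t` is an involution on the set of prototypes of nonsquare discriminant `D`. -/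
theorem protoT_involution (D : ℤ) (hD : 0 < D) (hns : ¬ IsSquare D)
    (P : ℤ × ℤ × ℤ × ℤ) (hP : IsPrototype D P) :
    IsPrototype D (protoT P) ∧ protoT (protoT P) = P :=
  protoT_involution_general D hns P hP
end

section
/- Let D be a positive nonsquare integer and S_D = {(a,b,c) ∈ ℤ³ : b² − 4ac = D, a > 0, c < 0, a+b+c < 0}. Then the sum over S_D of (a + b) equals 0 (in particular the sum is finite). -/
/-- The set `S_D = {(a,b,c) ∈ ℤ³ : b² − 4ac = D, a > 0, c < 0, a + b + c < 0}`. -/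
def SD (D : ℤ) : Set (ℤ × ℤ × ℤ) :=
  {p | p.2.1 ^ 2 - 4 * p.1 * p.2.2 = D ∧ 0 < p.1 ∧ p.2.2 < 0 ∧ p.1 + p.2.1 + p.2.2 < 0}

/-- For `D` a positive nonsquare integer, `S_D` is finite and
`∑_{(a,b,c) ∈ S_D} (a + b) = 0`. -/
theorem sum_a_add_b_eq_zero (D : ℤ) (hD : 0 < D) (hns : ¬ IsSquare D) :
    ∃ hfin : (SD D).Finite, ∑ p ∈ hfin.toFinset, (p.1 + p.2.1) = 0 := by
  have hsub : SD D ⊆ Set.Icc 1 D ×ˢ (Set.Icc (-D) D ×ˢ Set.Icc (-D) (-1)) := by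
    rintro ⟨a, b, c⟩ ⟨h1, h2, h3, h4⟩
    dsimp only at h1 h2 h3 h4
    simp only [Set.mem_prod, Set.mem_Icc]
    refine ⟨⟨h2, ?_⟩, ⟨?_, ?_⟩, ?_, by omega⟩
    · nlinarith [sq_nonneg b]
    · nlinarith [sq_nonneg (b + 1), sq_nonneg b]
    · nlinarith [sq_nonneg (b - 1), sq_nonneg b]
    · nlinarith [sq_nonneg b]
  have hfin : (SD D).Finite :=
    Set.Finite.subset (((Set.finite_Icc _ _).prod
      ((Set.finite_Icc _ _).prod (Set.finite_Icc _ _)))) hsub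
  refine ⟨hfin, ?_⟩
  refine Finset.sum_involution
    (fun p _ => (p.1, -2 * p.1 - p.2.1, p.1 + p.2.1 + p.2.2)) ?_ ?_
    (fun p hp => ?_) ?_
  · intro p _; dsimp only; ring
  · intro p _ hf heq
    apply hf
    have hb := congrArg (fun q : ℤ × ℤ × ℤ => q.2.1) heq
    dsimp only at hb ⊢
    omega
  · obtain ⟨a, b, c⟩ := p
    simp only [Set.Finite.mem_toFinset, SD, Set.mem_setOf_eq] at hp ⊢
    obtain ⟨h1, h2, h3, h4⟩ := hp
    exact ⟨by linear_combination h1, h2, h4, by omega⟩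
  · rintro ⟨a, b, c⟩ _
    dsimp only
    simp only [Prod.mk.injEq]
    exact ⟨trivial, by ring, by ring⟩
end

section
/- Let D be a positive nonsquare integer. Then Σ_{(a,b,c) ∈ S_D} (a − c) = Σ_{(a,b,c) ∈ S'_D} a, where S_D = {(a,b,c) ∈ ℤ³ : b²−4ac=D, a>0, c<0, a+b+c<0} and S'_D = {(a,b,c) ∈ ℤ³ : b²−4ac=D, a>0, c<0}. -/
/-- `S'_D = {(a,b,c) ∈ ℤ³ : b² − 4ac = D, a > 0, c < 0}`. -/
def SD' (D : ℤ) : Set (ℤ × ℤ × ℤ) :=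
  {p | p.2.1 ^ 2 - 4 * p.1 * p.2.2 = D ∧ 0 < p.1 ∧ p.2.2 < 0}

/-- For `D` a positive nonsquare integer,
`∑_{(a,b,c) ∈ S_D} (a − c) = ∑_{(a,b,c) ∈ S'_D} a`. -/
theorem sum_a_sub_c_eq_sum_a (D : ℤ) (hD : 0 < D) (hns : ¬ IsSquare D) :
    ∃ (hfin : (SD D).Finite) (hfin' : (SD' D).Finite),
      ∑ p ∈ hfin.toFinset, (p.1 - p.2.2) = ∑ p ∈ hfin'.toFinset, p.1 := by
  have hfin' : (SD' D).Finite := by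
    apply Set.Finite.subset (Set.finite_Icc ((-D, -D, -D) : ℤ × ℤ × ℤ) (D, D, D))
    rintro ⟨a, b, c⟩ ⟨h1, ha, hc⟩
    dsimp only at h1 ha hc
    have hc1 : c ≤ -1 := by omega
    have ha1 : 1 ≤ a := ha
    have hac : 4 ≤ (4 * a) * (-c) := by nlinarith
    have haD : a ≤ D := by nlinarith [sq_nonneg b]
    have hcD : -D ≤ c := by nlinarith [sq_nonneg b]
    have hb2 : b ^ 2 ≤ D := by nlinarith
    have hbD : b ≤ D := by nlinarith
    have hbD' : -D ≤ b := by nlinarith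
    simp only [Set.mem_Icc, Prod.mk_le_mk, Prod.le_def]
    refine ⟨⟨by omega, hbD', hcD⟩, haD, hbD, by omega⟩
  have hfin : (SD D).Finite :=
    hfin'.subset (fun p hp => ⟨hp.1, hp.2.1, hp.2.2.1⟩)
  refine ⟨hfin, hfin', ?_⟩
  have hne : ∀ p ∈ SD' D, p.1 + p.2.1 + p.2.2 ≠ 0 := by
    rintro ⟨a, b, c⟩ ⟨h1, ha, hc⟩ h0
    have hb : b = -a - c := by
      simp only at h0; linarith
    exact hns ⟨a - c, by simp only at h1 ⊢; subst hb; linear_combination -h1⟩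
  have hsub : hfin.toFinset ⊆ hfin'.toFinset := by
    intro p hp
    rw [Set.Finite.mem_toFinset] at *
    exact ⟨hp.1, hp.2.1, hp.2.2.1⟩
  rw [← Finset.sum_sdiff hsub, Finset.sum_sub_distrib]
  have key : ∑ p ∈ hfin'.toFinset \ hfin.toFinset, p.1
      = ∑ p ∈ hfin.toFinset, (-p.2.2) := by
    apply Finset.sum_nbij' (fun p => (-p.2.2, -p.2.1, -p.1))
      (fun p => (-p.2.2, -p.2.1, -p.1))
    · rintro ⟨a, b, c⟩ hp
      rw [Finset.mem_sdiff, Set.Finite.mem_toFinset, Set.Finite.mem_toFinset] at hp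
      obtain ⟨⟨h1, ha, hc⟩, hnot⟩ := hp
      have hsum : 0 < a + b + c := by
        rcases lt_trichotomy (a + b + c) 0 with h | h | h
        · exact absurd (⟨h1, ha, hc, h⟩ : (a,b,c) ∈ SD D) hnot
        · exact absurd h (hne (a, b, c) ⟨h1, ha, hc⟩)
        · exact h
      rw [Set.Finite.mem_toFinset]
      exact ⟨by simp only at h1 ⊢; ring_nf; linarith, by simpa using hc, by simpa using ha,
        by simp only; linarith⟩
    · rintro ⟨a, b, c⟩ hp
      rw [Set.Finite.mem_toFinset] at hp
      obtain ⟨h1, ha, hc, hs⟩ := hp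
      rw [Finset.mem_sdiff, Set.Finite.mem_toFinset, Set.Finite.mem_toFinset]
      constructor
      · exact ⟨by simp only at h1 ⊢; ring_nf; linarith, by simpa using hc, by simpa using ha⟩
      · intro hmem
        obtain ⟨_, _, _, h4⟩ := hmem
        simp only at h4 hs
        linarith
    · rintro ⟨a, b, c⟩ _; simp
    · rintro ⟨a, b, c⟩ _; simp
    · rintro ⟨a, b, c⟩ _; simp
  rw [key, Finset.sum_neg_distrib]
  ring
end

section
/- Let λ > 1. Define w(a,b,c) = v'(a,b,c) + v'(s(a,b,c)) where v'(a,b,c) = aλ(λ−1)(1 + 1/λ² + 1/(λ−1)²) evaluated with λ the positive root of ax²+bx+c, and s(a,b,c) = (a,−2a−b,a+b+c). Then for (a,b,c) ∈ ℤ³ with b²−4ac = D nonsquare, a > 0, c < 0, a+b+c < 0, one has w(a,b,c) = 4a + b + b²/a + ab/c − 2c − a(2a+b)/(a+b+c), an identity of rational numbers. -/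
/-!
The quadratic of `s(a,b,c)` is the quadratic of `(a,b,c)` after `X ↦ 1 - X`, so `1 - μ` is the
second root of `aX² + bX + c`. Both `λ` and `μ` exceed `1` (each quadratic is negative at `0` and
at `1`), so `λ ≠ 1 - μ` and Vieta gives `b = -a(λ + 1 - μ)`, `c = aλ(1 - μ)`. After this
substitution the claim is an identity of rational functions in `a, λ, μ`.
-/

/-- The paper's `v'(a,b,c)`, as a function of `a` and the root `x = λ`. -/
noncomputable def vPrime (a x : ℝ) : ℝ :=
  a * x * (x - 1) * (1 + 1 / x ^ 2 + 1 / (x - 1) ^ 2)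

lemma one_lt_of_quadratic_root {a b c x : ℝ} (ha : 0 < a) (hc : c < 0) (habc : a + b + c < 0)
    (hx : 0 < x) (hroot : a * x ^ 2 + b * x + c = 0) : 1 < x := by
  by_contra! hx1
  have hq : a * x ^ 2 + b * x + c = (1 - x) * c + x * (a + b + c) - a * x * (1 - x) := by ring
  have : (1 - x) * c ≤ 0 := mul_nonpos_of_nonneg_of_nonpos (by linarith) hc.le
  have : x * (a + b + c) < 0 := mul_neg_of_pos_of_neg hx habc
  have : 0 ≤ a * x * (1 - x) := by have := sub_nonneg.2 hx1; positivity
  linarith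

lemma vieta_of_quadratic_roots {a b c x y : ℝ} (hxy : x ≠ y)
    (hx : a * x ^ 2 + b * x + c = 0) (hy : a * y ^ 2 + b * y + c = 0) :
    b = -a * (x + y) ∧ c = a * x * y := by
  have hsum : (x - y) * (a * (x + y) + b) = 0 := by linear_combination hx - hy
  have hb : a * (x + y) + b = 0 := (mul_eq_zero.1 hsum).resolve_left (sub_ne_zero.2 hxy)
  exact ⟨by linear_combination hb, by linear_combination hx - x * hb⟩

lemma vPrime_add_vPrime {a b c l m : ℝ} (ha : a ≠ 0) (hl0 : l ≠ 0) (hl1 : l ≠ 1)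
    (hm0 : m ≠ 0) (hm1 : m ≠ 1) (hb : b = -a * (l + (1 - m))) (hc : c = a * l * (1 - m)) :
    vPrime a l + vPrime a m =
      4 * a + b + b ^ 2 / a + a * b / c - 2 * c - a * (2 * a + b) / (a + b + c) := by
  have habc : a + b + c = a * m * (1 - l) := by rw [hb, hc]; ring
  rw [habc, hc, hb]
  have : l - 1 ≠ 0 := sub_ne_zero.2 hl1
  have : m - 1 ≠ 0 := sub_ne_zero.2 hm1
  have : 1 - l ≠ 0 := sub_ne_zero.2 hl1.symm
  have : 1 - m ≠ 0 := sub_ne_zero.2 hm1.symm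
  unfold vPrime
  field_simp
  ring

theorem w_formula_general (a b c : ℤ) (ha : 0 < a) (hc : c < 0) (habc : a + b + c < 0)
    (lam mu : ℝ) (hlam : 0 < lam) (hmu : 0 < mu)
    (hlroot : (a : ℝ) * lam ^ 2 + (b : ℝ) * lam + (c : ℝ) = 0)
    (hmroot : (a : ℝ) * mu ^ 2 + ((-2 : ℝ) * a - b) * mu + ((a : ℝ) + b + c) = 0) :
    (a : ℝ) * lam * (lam - 1) * (1 + 1 / lam ^ 2 + 1 / (lam - 1) ^ 2) +
      (a : ℝ) * mu * (mu - 1) * (1 + 1 / mu ^ 2 + 1 / (mu - 1) ^ 2) =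
    4 * a + b + (b : ℝ) ^ 2 / a + (a : ℝ) * b / c - 2 * c -
      (a : ℝ) * (2 * a + b) / ((a : ℝ) + b + c) := by
  have haR : (0 : ℝ) < a := by exact_mod_cast ha
  have hcR : (c : ℝ) < 0 := by exact_mod_cast hc
  have habcR : (a : ℝ) + b + c < 0 := by exact_mod_cast habc
  have hlam1 : 1 < lam := one_lt_of_quadratic_root haR hcR habcR hlam hlroot
  have hmu1 : 1 < mu :=
    one_lt_of_quadratic_root haR habcR (by linarith) hmu hmroot
  have hflip : (a : ℝ) * (1 - mu) ^ 2 + b * (1 - mu) + c = 0 := by linear_combination hmroot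
  obtain ⟨hb, hc'⟩ := vieta_of_quadratic_roots (by linarith) hlroot hflip
  exact vPrime_add_vPrime haR.ne' hlam.ne' hlam1.ne' hmu.ne' hmu1.ne' hb hc'

/-- With `λ` the positive root of `aX² + bX + c` and `μ` the positive root of
`aX² + (−2a−b)X + (a+b+c)` (the quadratic of `s(a,b,c) = (a, −2a−b, a+b+c)`),
setting `v'(a, λ) = aλ(λ−1)(1 + 1/λ² + 1/(λ−1)²)`, one has
`w = v'(a,λ) + v'(a,μ) = 4a + b + b²/a + ab/c − 2c − a(2a+b)/(a+b+c)`. -/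
theorem w_formula (D a b c : ℤ) (hD : b ^ 2 - 4 * a * c = D) (hDpos : 0 < D)
    (hns : ¬ IsSquare D) (ha : 0 < a) (hc : c < 0) (habc : a + b + c < 0)
    (lam mu : ℝ) (hlam : 0 < lam) (hmu : 0 < mu)
    (hlroot : (a : ℝ) * lam ^ 2 + (b : ℝ) * lam + (c : ℝ) = 0)
    (hmroot : (a : ℝ) * mu ^ 2 + ((-2 : ℝ) * a - b) * mu + ((a : ℝ) + b + c) = 0) :
    (a : ℝ) * lam * (lam - 1) * (1 + 1 / lam ^ 2 + 1 / (lam - 1) ^ 2) +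
      (a : ℝ) * mu * (mu - 1) * (1 + 1 / mu ^ 2 + 1 / (mu - 1) ^ 2) =
    4 * a + b + (b : ℝ) ^ 2 / a + (a : ℝ) * b / c - 2 * c -
      (a : ℝ) * (2 * a + b) / ((a : ℝ) + b + c) :=
  w_formula_general a b c ha hc habc lam mu hlam hmu hlroot hmroot
end

section
/- Let D be a positive nonsquare integer and S_D = {(a,b,c) ∈ ℤ³ : b²−4ac=D, a>0, c<0, a+b+c<0}. Then Σ_{S_D} (2bc/a + b²/a − a + 2c) = 0 as a sum of rational numbers. -/
lemma SD_finite (D : ℤ) (hD : 0 < D) : (SD D).Finite := by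
  apply Set.Finite.subset (Set.finite_Icc ((1 : ℤ), (-D, -D)) ((D : ℤ), (D, -1)))
  rintro ⟨a, b, c⟩ ⟨hdisc, ha, hc, habc⟩
  simp only [Set.mem_Icc, Prod.mk_le_mk, Prod.le_def] at *
  have h4 : 4 * a * (-c) = D - b ^ 2 := by linarith
  have hb2 : b ^ 2 < D := by nlinarith
  have hbD : -D ≤ b ∧ b ≤ D := by constructor <;> nlinarith
  exact ⟨⟨ha, hbD.1, by nlinarith⟩, by nlinarith, hbD.2, by omega⟩

/-- For `D` a positive nonsquare integer,
`∑_{(a,b,c) ∈ S_D} (2bc/a + b²/a − a + 2c) = 0` as rational numbers. -/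
theorem sum_identity_sixty (D : ℤ) (hD : 0 < D) (hns : ¬ IsSquare D) :
    ∃ hfin : (SD D).Finite,
      ∑ p ∈ hfin.toFinset,
        (2 * (p.2.1 : ℚ) * p.2.2 / p.1 + (p.2.1 : ℚ) ^ 2 / p.1 - p.1 + 2 * p.2.2) = 0 := by
  refine ⟨SD_finite D hD, ?_⟩
  set f : ℤ × ℤ × ℤ → ℚ := fun p =>
    2 * (p.2.1 : ℚ) * p.2.2 / p.1 + (p.2.1 : ℚ) ^ 2 / p.1 - p.1 + 2 * p.2.2 with hf
  set σ : ℤ × ℤ × ℤ → ℤ × ℤ × ℤ := fun p => (p.1, -2 * p.1 - p.2.1, p.1 + p.2.1 + p.2.2) with hσ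
  have hmem : ∀ p ∈ (SD_finite D hD).toFinset, σ p ∈ (SD_finite D hD).toFinset := by
    rintro ⟨a, b, c⟩ hp
    simp only [Set.Finite.mem_toFinset, SD, Set.mem_setOf_eq] at hp ⊢
    obtain ⟨h1, h2, h3, h4⟩ := hp
    refine ⟨by linear_combination h1, h2, h4, by linarith⟩
  have key : ∀ p ∈ (SD_finite D hD).toFinset, f p + f (σ p) = 0 := by
    rintro ⟨a, b, c⟩ hp
    simp only [Set.Finite.mem_toFinset, SD, Set.mem_setOf_eq] at hp
    have ha : (a : ℚ) ≠ 0 := by exact_mod_cast hp.2.1.ne'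
    simp only [hf, hσ]
    push_cast
    field_simp
    ring
  apply Finset.sum_involution (fun p _ => σ p) key
  · intro p hp hfp hfix
    have := key p hp
    rw [hfix] at this
    exact hfp (by linarith)
  · exact hmem
  · rintro ⟨a, b, c⟩ _
    simp only [hσ, Prod.mk.injEq]
    exact ⟨trivial, by ring, by ring⟩
end
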